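/- Let G be a g-chromatic edge-colored graph of order n with more than C(n−w, 2) edges, and let 1 ≤ w ≤ n−1. If g(c) ≤ (|E(G)| / (n − w)) · f(c) for every color c, then G has an f-chromatic spanning forest with exactly w components. -/

import Mathlib

/-!
Let `t = n - w`. A spanning forest with `w` components and at most `f c` edges of each colour
`c` is a set of `t` edges independent both in the graphic matroid of `G` (rank `ρ`) and in the
partition matroid allowing `f c` edges of colour `c` (rank `r_f`). By Edmonds' matroid
intersection theorem such a set exists as soon as `t ≤ ρ A + r_f (E \ A)` for every `A ⊆ E`.

Fix `A`, let `R` be the colours whose capacity `E \ A` saturates and `N` the edges of `E` with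
colours outside `R`. Then `r_f (E \ A) = ∑_{c ∈ R} f c + |Y|` for the edges `Y` of `E \ A` with
colours outside `R`, and `N ⊆ A ∪ Y`, so it suffices that `t ≤ ρ N + ∑_{c ∈ R} f c`. If not,
`d = t - ∑_{c ∈ R} f c` exceeds `ρ N`, so `N` has at most `C(d, 2)` edges, while the colours in
`R` carry at most `|E| (t - d) / t` edges by the hypothesis on `g`; together this forces
`|E| ≤ t (d - 1) / 2 ≤ C(t, 2)`, contrary to the hypothesis.
-/

open Finset SimpleGraph

section MatroidRank

variable {α : Type*} [DecidableEq α]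

structure IsMatroidRank (r : Finset α → ℕ) : Prop where
  le_card (S : Finset α) : r S ≤ #S
  mono : Monotone r
  submod (S T : Finset α) : r (S ∪ T) + r (S ∩ T) ≤ r S + r T

namespace IsMatroidRank

variable {r r₁ r₂ : Finset α → ℕ}

theorem empty (hr : IsMatroidRank r) : r ∅ = 0 :=
  Nat.le_zero.mp (hr.le_card ∅)

theorem singleton_le_one (hr : IsMatroidRank r) (a : α) : r {a} ≤ 1 :=
  hr.le_card {a}

theorem singleton_le_insert (hr : IsMatroidRank r) (a : α) (S : Finset α) :
    r {a} ≤ r (insert a S) :=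
  hr.mono (singleton_subset_iff.mpr (mem_insert_self a S))

theorem insert_le (hr : IsMatroidRank r) (a : α) (S : Finset α) :
    r (insert a S) ≤ r {a} + r S := by
  have := hr.submod {a} S
  rw [← insert_eq] at this
  omega

theorem singleton_eq_one_of_lt_insert (hr : IsMatroidRank r) {a : α} {S : Finset α}
    (h : r S < r (insert a S)) : r {a} = 1 := by
  have := hr.insert_le a S
  have := hr.singleton_le_one a
  omega

theorem union_le_add_card (hr : IsMatroidRank r) (S T : Finset α) : r (S ∪ T) ≤ r S + #T := by
  have := hr.submod S T
  have := hr.le_card T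
  omega

theorem contract (hr : IsMatroidRank r) (e : α) :
    IsMatroidRank fun X ↦ r (insert e X) - r {e} where
  le_card X := by
    have := hr.insert_le e X
    have := hr.le_card X
    omega
  mono X Y h := Nat.sub_le_sub_right (hr.mono (insert_subset_insert e h)) _
  submod X Y := by
    have h := hr.submod (insert e X) (insert e Y)
    rw [← insert_union_distrib, ← insert_inter_distrib] at h
    have := hr.singleton_le_insert e X
    have := hr.singleton_le_insert e Y
    have := hr.singleton_le_insert e (X ∩ Y)
    have := hr.singleton_le_insert e (X ∪ Y)
    omega

/-- If the intersection hypothesis fails for `E` at `A`, it holds for the contraction of `e`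
at every `B`: otherwise submodularity at `A, insert e B` in both matroids would violate it for
`insert e E` at `A ∩ B` or at `insert e (A ∪ B)`. -/
theorem le_insert_add_insert (h₁ : IsMatroidRank r₁) (h₂ : IsMatroidRank r₂) {e : α}
    {E A B : Finset α} {t : ℕ} (he : e ∉ E) (hAE : A ⊆ E) (hBE : B ⊆ E)
    (hE : ∀ X ⊆ insert e E, t ≤ r₁ X + r₂ (insert e E \ X)) (hA : r₁ A + r₂ (E \ A) < t) :
    t < r₁ (insert e B) + r₂ (insert e (E \ B)) := by
  have heA : e ∉ A := fun h ↦ he (hAE h)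
  have hsub₁ := h₁.submod A (insert e B)
  have hsub₂ := h₂.submod (E \ A) (insert e (E \ B))
  rw [union_insert, inter_insert_of_notMem heA] at hsub₁
  rw [union_insert, ← sdiff_inter_distrib_right,
    inter_insert_of_notMem (fun h ↦ he (mem_sdiff.mp h).1), ← sdiff_union_distrib] at hsub₂
  have h₃ := hE (A ∩ B) (inter_subset_left.trans (hAE.trans (subset_insert e E)))
  have h₄ := hE (insert e (A ∪ B)) (insert_subset_insert e (union_subset hAE hBE))
  rw [insert_sdiff_of_notMem _ (fun h ↦ heA (mem_inter.mp h).1)] at h₃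
  rw [insert_sdiff_insert, sdiff_insert_of_notMem he] at h₄
  omega

/-- Edmonds' matroid intersection theorem, in the direction producing a common independent set
(a set `S` is independent for `r` when `r S = #S`). -/
theorem exists_common_indep (h₁ : IsMatroidRank r₁) (h₂ : IsMatroidRank r₂) {E : Finset α}
    {t : ℕ} (hE : ∀ A ⊆ E, t ≤ r₁ A + r₂ (E \ A)) :
    ∃ S ⊆ E, #S = t ∧ r₁ S = t ∧ r₂ S = t := by
  induction E using Finset.induction_on generalizing r₁ r₂ t with
  | empty =>
    have := hE ∅ subset_rfl
    rw [h₁.empty, sdiff_self, bot_eq_empty, h₂.empty] at this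
    exact ⟨∅, subset_rfl, by simp [h₁.empty, h₂.empty]; omega⟩
  | insert e E he ih =>
    by_cases hdel : ∀ A ⊆ E, t ≤ r₁ A + r₂ (E \ A)
    · obtain ⟨S, hSE, hS⟩ := ih h₁ h₂ hdel
      exact ⟨S, hSE.trans (subset_insert e E), hS⟩
    push Not at hdel
    obtain ⟨A, hAE, hA⟩ := hdel
    have he₁ : r₁ {e} = 1 := h₁.singleton_eq_one_of_lt_insert (S := A) <| by
      have := hE (insert e A) (insert_subset_insert e hAE)
      rw [insert_sdiff_insert, sdiff_insert_of_notMem he] at this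
      omega
    have he₂ : r₂ {e} = 1 := h₂.singleton_eq_one_of_lt_insert (S := E \ A) <| by
      have := hE A (hAE.trans (subset_insert e E))
      rw [insert_sdiff_of_notMem _ fun h ↦ he (hAE h)] at this
      omega
    have hcontract (B : Finset α) (hBE : B ⊆ E) :
        t - 1 ≤ (r₁ (insert e B) - r₁ {e}) + (r₂ (insert e (E \ B)) - r₂ {e}) := by
      have := le_insert_add_insert h₁ h₂ he hAE hBE hE hA
      have := h₁.singleton_le_insert e B
      have := h₂.singleton_le_insert e (E \ B)
      omega
    obtain ⟨S, hSE, hS, hS₁, hS₂⟩ := ih (h₁.contract e) (h₂.contract e) hcontract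
    have heS : e ∉ S := fun h ↦ he (hSE h)
    have := h₁.singleton_le_insert e S
    have := h₂.singleton_le_insert e S
    refine ⟨insert e S, insert_subset_insert e hSE, ?_, by omega, by omega⟩
    rw [card_insert_of_notMem heS]
    omega

end IsMatroidRank

end MatroidRank

section PartitionRank

variable {α C : Type*} [Fintype C] [DecidableEq C] (col : α → C) (f : C → ℕ)

def partitionRank (S : Finset α) : ℕ := ∑ c, min (f c) #{a ∈ S | col a = c}

theorem card_eq_sum_card_filter_col (S : Finset α) : #S = ∑ c, #{a ∈ S | col a = c} :=
  card_eq_sum_card_fiberwise fun _ _ ↦ mem_univ _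

theorem isMatroidRank_partitionRank [DecidableEq α] : IsMatroidRank (partitionRank col f) where
  le_card S := (card_eq_sum_card_filter_col col S).symm ▸ sum_le_sum fun _ _ ↦ min_le_right _ _
  mono _ _ h := sum_le_sum fun _ _ ↦ min_le_min_left _ (card_le_card (filter_subset_filter _ h))
  submod S T := by
    simp only [partitionRank, ← sum_add_distrib]
    refine sum_le_sum fun c _ ↦ ?_
    have := card_union_add_card_inter {a ∈ S | col a = c} {a ∈ T | col a = c}
    have := card_le_card (filter_subset_filter (col · = c) (inter_subset_left (s₁ := S) (s₂ := T)))
    have := card_le_card (filter_subset_filter (col · = c) (inter_subset_right (s₁ := S) (s₂ := T)))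
    rw [← filter_union, ← filter_inter_distrib] at *
    omega

variable {col f}

theorem card_filter_col_le_of_partitionRank_eq_card {S : Finset α}
    (h : partitionRank col f S = #S) (c : C) : #{a ∈ S | col a = c} ≤ f c := by
  rw [partitionRank, card_eq_sum_card_filter_col col,
    sum_eq_sum_iff_of_le fun _ _ ↦ min_le_right _ _] at h
  exact min_eq_right_iff.mp (h c (mem_univ c))

theorem partitionRank_eq_sum_add_card {X : Finset α} {R : Finset C}
    (hR : ∀ c ∈ R, f c ≤ #{a ∈ X | col a = c}) (hRc : ∀ c ∉ R, #{a ∈ X | col a = c} ≤ f c) :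
    partitionRank col f X = ∑ c ∈ R, f c + #{a ∈ X | col a ∉ R} := by
  rw [partitionRank, ← sum_add_sum_compl R, card_eq_sum_card_fiberwise (f := col) (t := Rᶜ)
    fun a ha ↦ by simpa using (mem_filter.mp ha).2]
  congr 1
  · exact sum_congr rfl fun c hc ↦ min_eq_left (hR c hc)
  · refine sum_congr rfl fun c hc ↦ ?_
    rw [min_eq_right (hRc c (mem_compl.mp hc)), filter_filter]
    exact congrArg card (filter_congr fun a _ ↦ ⟨fun h ↦ ⟨h ▸ mem_compl.mp hc, h⟩, fun h ↦ h.2⟩)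

end PartitionRank

theorem Finset.sum_mul_add_one_le {ι : Type*} (s : Finset ι) (a : ι → ℕ) :
    ∑ i ∈ s, a i * (a i + 1) ≤ (∑ i ∈ s, a i) * (∑ i ∈ s, a i + 1) := by
  rw [sum_mul]
  exact sum_le_sum fun i hi ↦
    Nat.mul_le_mul_left _ (Nat.add_le_add_right (single_le_sum (fun _ _ ↦ Nat.zero_le _) hi) 1)

namespace SimpleGraph

variable {V : Type*} {G H : SimpleGraph V} {x y u v : V}

theorem reachable_sup_edge : (G ⊔ edge x y).Reachable x y := by
  by_cases hxy : x = y
  · rw [hxy]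
  · exact Adj.reachable (Or.inr ((edge_adj ..).mpr ⟨Or.inl ⟨rfl, rfl⟩, hxy⟩))

theorem reachable_sup_edge_iff :
    (G ⊔ edge x y).Reachable u v ↔ G.Reachable u v ∨
      (G.Reachable u x ∧ G.Reachable y v) ∨ (G.Reachable u y ∧ G.Reachable x v) := by
  constructor
  · intro h
    rw [reachable_iff_reflTransGen] at h
    induction h with
    | refl => exact Or.inl .rfl
    | @tail b c _ hbc ih =>
      rcases hbc with hbc | hbc
      · have hbc := hbc.reachable
        rcases ih with h | ⟨h₁, h₂⟩ | ⟨h₁, h₂⟩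
        · exact Or.inl (h.trans hbc)
        · exact Or.inr (Or.inl ⟨h₁, h₂.trans hbc⟩)
        · exact Or.inr (Or.inr ⟨h₁, h₂.trans hbc⟩)
      · obtain ⟨⟨rfl, rfl⟩ | ⟨rfl, rfl⟩, -⟩ := (edge_adj ..).mp hbc
        · rcases ih with h | ⟨h₁, -⟩ | ⟨h₁, -⟩
          · exact Or.inr (Or.inl ⟨h, .rfl⟩)
          · exact Or.inr (Or.inl ⟨h₁, .rfl⟩)
          · exact Or.inl h₁
        · rcases ih with h | ⟨h₁, -⟩ | ⟨h₁, -⟩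
          · exact Or.inr (Or.inr ⟨h, .rfl⟩)
          · exact Or.inl h₁
          · exact Or.inr (Or.inr ⟨h₁, .rfl⟩)
  · have hxy : (G ⊔ edge x y).Reachable x y := reachable_sup_edge
    rintro (h | ⟨h₁, h₂⟩ | ⟨h₁, h₂⟩)
    · exact h.mono le_sup_left
    · exact (h₁.mono le_sup_left).trans (hxy.trans (h₂.mono le_sup_left))
    · exact (h₁.mono le_sup_left).trans (hxy.symm.trans (h₂.mono le_sup_left))

theorem card_connectedComponent_sup_edge_of_reachable (h : G.Reachable x y) :
    Nat.card (G ⊔ edge x y).ConnectedComponent = Nat.card G.ConnectedComponent := by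
  have : (G ⊔ edge x y).Reachable = G.Reachable := by
    ext u v
    rw [reachable_sup_edge_iff]
    exact ⟨fun h' ↦ h'.elim id (Or.rec (fun ⟨h₁, h₂⟩ ↦ h₁.trans (h.trans h₂))
      fun ⟨h₁, h₂⟩ ↦ h₁.trans (h.symm.trans h₂)), Or.inl⟩
  simp only [ConnectedComponent, this]

theorem card_connectedComponent_eq_sup_edge_add_one [Finite V] (h : ¬G.Reachable x y) :
    Nat.card G.ConnectedComponent = Nat.card (G ⊔ edge x y).ConnectedComponent + 1 := by
  -- The components of `G` other than that of `y` are exactly the components of `G ⊔ edge x y`.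
  let φ : {c // c ≠ G.connectedComponentMk y} → (G ⊔ edge x y).ConnectedComponent :=
    fun c ↦ c.1.map (Hom.ofLE le_sup_left)
  have hφ : φ.Bijective := by
    constructor
    · rintro ⟨c, hc⟩ ⟨d, hd⟩ hcd
      induction c using ConnectedComponent.ind with | h u => ?_
      induction d using ConnectedComponent.ind with | h v => ?_
      simp only [φ, ConnectedComponent.map_mk, Hom.coe_ofLE, id, ConnectedComponent.eq,
        reachable_sup_edge_iff] at hcd
      simp only [ne_eq, ConnectedComponent.eq] at hc hd
      rw [Subtype.mk.injEq, ConnectedComponent.eq]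
      rcases hcd with huv | ⟨-, hyv⟩ | ⟨huy, -⟩
      · exact huv
      · exact absurd hyv.symm hd
      · exact absurd huy hc
    · intro c
      induction c using ConnectedComponent.ind with | h v => ?_
      by_cases hvy : G.Reachable v y
      · refine ⟨⟨G.connectedComponentMk x, fun hxy ↦ h (ConnectedComponent.eq.mp hxy)⟩, ?_⟩
        simp only [φ, ConnectedComponent.map_mk, Hom.coe_ofLE, id, ConnectedComponent.eq]
        exact reachable_sup_edge.trans ((hvy.mono le_sup_left).symm)
      · exact ⟨⟨G.connectedComponentMk v, fun hv ↦ hvy (ConnectedComponent.eq.mp hv)⟩, rfl⟩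
  classical
  rw [← Nat.card_congr (Equiv.ofBijective φ hφ), ← Finite.card_option,
    Nat.card_congr (Equiv.optionSubtypeNe _)]

theorem card_connectedComponent_le_sup_edge_add_one [Finite V] :
    Nat.card G.ConnectedComponent ≤ Nat.card (G ⊔ edge x y).ConnectedComponent + 1 := by
  by_cases h : G.Reachable x y
  · rw [card_connectedComponent_sup_edge_of_reachable h]
    exact Nat.le_succ _
  · exact (card_connectedComponent_eq_sup_edge_add_one h).le

/-- The local form of the submodularity of the graphic rank. -/
theorem card_connectedComponent_sup_edge_add_le [Finite V] (hGH : G ≤ H) :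
    Nat.card (G ⊔ edge x y).ConnectedComponent + Nat.card H.ConnectedComponent ≤
      Nat.card G.ConnectedComponent + Nat.card (H ⊔ edge x y).ConnectedComponent := by
  by_cases hG : G.Reachable x y
  · rw [card_connectedComponent_sup_edge_of_reachable hG,
      card_connectedComponent_sup_edge_of_reachable (hG.mono hGH)]
  · have := card_connectedComponent_eq_sup_edge_add_one hG
    have := card_connectedComponent_le_sup_edge_add_one (G := H) (x := x) (y := y)
    omega

theorem card_connectedComponent_bot :
    Nat.card (⊥ : SimpleGraph V).ConnectedComponent = Nat.card V :=
  (Nat.card_eq_of_bijective _ ⟨fun _ _ h ↦ reachable_bot.mp (ConnectedComponent.eq.mp h),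
    ConnectedComponent.ind fun v ↦ ⟨v, rfl⟩⟩).symm

theorem fromEdgeSet_insert (s : Set (Sym2 V)) (x y : V) :
    fromEdgeSet (insert s(x, y) s) = fromEdgeSet s ⊔ edge x y := by
  rw [Set.insert_eq, fromEdgeSet_union, sup_comm, edge]

theorem two_mul_ncard_edgeSet_le [Fintype V] (G : SimpleGraph V) :
    2 * G.edgeSet.ncard ≤ (Fintype.card V - Nat.card G.ConnectedComponent) *
      (Fintype.card V - Nat.card G.ConnectedComponent + 1) := by
  classical
  let q := G.connectedComponentMk
  let size : G.ConnectedComponent → ℕ := fun c ↦ #{v | q v = c}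
  have hsum : ∑ c, size c = Fintype.card V := (card_eq_sum_card_fiberwise (by simp)).symm
  have hpos : ∀ c, 1 ≤ size c :=
    ConnectedComponent.ind fun v ↦ card_pos.mpr ⟨v, mem_filter.mpr ⟨mem_univ v, rfl⟩⟩
  have hdarts : Fintype.card G.Dart ≤ ∑ c, (size c - 1) * (size c - 1 + 1) := by
    rw [← card_univ, card_eq_sum_card_fiberwise (f := fun d : G.Dart ↦ q d.fst) (t := univ)
      (by simp)]
    refine sum_le_sum fun c _ ↦ ?_
    calc #{d : G.Dart | q d.fst = c} ≤ #({v | q v = c} : Finset V).offDiag := by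
          refine card_le_card_of_injOn (fun d ↦ d.toProd) (fun d hd ↦ ?_)
            fun d _ d' _ h ↦ (Dart.ext_iff d d').mpr h
          have hd : q d.fst = c := (mem_filter.mp hd).2
          have hsnd : q d.snd = c :=
            (ConnectedComponent.connectedComponentMk_eq_of_adj d.adj).symm.trans hd
          simp [hd, hsnd, d.adj.ne]
      _ = (size c - 1) * (size c - 1 + 1) := by
          obtain ⟨m, hm⟩ := Nat.exists_eq_add_of_le' (hpos c)
          rw [offDiag_card]
          change size c * size c - size c = _
          rw [hm, Nat.add_sub_cancel]
          exact Nat.sub_eq_of_eq_add (by ring)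
  have hk : ∑ c, (size c - 1) = Fintype.card V - Nat.card G.ConnectedComponent := by
    rw [sum_tsub_distrib _ fun c _ ↦ hpos c, hsum, sum_const, card_univ, smul_eq_mul, mul_one,
      Nat.card_eq_fintype_card]
  calc 2 * G.edgeSet.ncard = Fintype.card G.Dart := by
        rw [dart_card_eq_twice_card_edges, Set.ncard_eq_toFinset_card']
        rfl
    _ ≤ ∑ c, (size c - 1) * (size c - 1 + 1) := hdarts
    _ ≤ _ := hk ▸ sum_mul_add_one_le _ _

end SimpleGraph

theorem Finset.ncard_sep_coe {α : Type*} (S : Finset α) (p : α → Prop) [DecidablePred p] :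
    {a ∈ (S : Set α) | p a}.ncard = #{a ∈ S | p a} := by
  rw [← Set.ncard_coe_finset, coe_filter]
  rfl

theorem Nat.mul_le_mul_of_cast_le_div_mul {a b c t : ℕ} (h : (a : ℝ) ≤ b / t * c) :
    t * a ≤ b * c := by
  rcases Nat.eq_zero_or_pos t with rfl | ht
  · simp
  rw [div_mul_eq_mul_div, le_div_iff₀ (by exact_mod_cast ht)] at h
  exact_mod_cast (by linarith : (t : ℝ) * a ≤ b * c)

theorem Nat.two_mul_add_le_mul {a b e r t : ℕ} (ht : t = e + 1 + r)
    (ha : 2 * a ≤ e * (e + 1)) (hb : t * b ≤ (a + b) * r) : 2 * (a + b) ≤ t * e := by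
  subst ht
  nlinarith

section GraphicRank

variable {V : Type*} [Fintype V]

noncomputable def numComponents (S : Finset (Sym2 V)) : ℕ :=
  Nat.card (fromEdgeSet (S : Set (Sym2 V))).ConnectedComponent

noncomputable def graphicRank (S : Finset (Sym2 V)) : ℕ := Fintype.card V - numComponents S

theorem numComponents_empty : numComponents (∅ : Finset (Sym2 V)) = Fintype.card V := by
  rw [numComponents, coe_empty, fromEdgeSet_empty, card_connectedComponent_bot,
    Nat.card_eq_fintype_card]

theorem numComponents_anti {S T : Finset (Sym2 V)} (h : S ⊆ T) :
    numComponents T ≤ numComponents S :=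
  ConnectedComponent.card_le_card_of_le (fromEdgeSet_mono (coe_subset.mpr h))

theorem numComponents_le_card (S : Finset (Sym2 V)) : numComponents S ≤ Fintype.card V :=
  numComponents_empty (V := V) ▸ numComponents_anti (empty_subset S)

theorem two_mul_card_le_graphicRank_mul {S : Finset (Sym2 V)} (hS : ∀ e ∈ S, ¬e.IsDiag) :
    2 * #S ≤ graphicRank S * (graphicRank S + 1) := by
  have hE : (fromEdgeSet (S : Set (Sym2 V))).edgeSet = S :=
    (edgeSet_eq_iff _ _).mpr ⟨rfl, Set.disjoint_left.mpr hS⟩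
  have := (fromEdgeSet (S : Set (Sym2 V))).two_mul_ncard_edgeSet_le
  rwa [hE, Set.ncard_coe_finset] at this

variable [DecidableEq V]

theorem numComponents_le_insert_add_one (a : Sym2 V) (S : Finset (Sym2 V)) :
    numComponents S ≤ numComponents (insert a S) + 1 := by
  induction a using Sym2.ind with | h x y => ?_
  rw [numComponents, numComponents, coe_insert, fromEdgeSet_insert]
  exact card_connectedComponent_le_sup_edge_add_one

theorem card_le_numComponents_add_card (S : Finset (Sym2 V)) :
    Fintype.card V ≤ numComponents S + #S := by
  induction S using Finset.induction_on with
  | empty => rw [numComponents_empty, card_empty, add_zero]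
  | insert a S ha ih =>
    have := numComponents_le_insert_add_one a S
    rw [card_insert_of_notMem ha]
    omega

theorem numComponents_insert_add_le {S T : Finset (Sym2 V)} (h : S ⊆ T) (a : Sym2 V) :
    numComponents (insert a S) + numComponents T ≤
      numComponents S + numComponents (insert a T) := by
  induction a using Sym2.ind with | h x y => ?_
  simp only [numComponents, coe_insert, fromEdgeSet_insert]
  exact card_connectedComponent_sup_edge_add_le (fromEdgeSet_mono (coe_subset.mpr h))

theorem numComponents_add_le_union {I S : Finset (Sym2 V)} (hIS : I ⊆ S) (D : Finset (Sym2 V)) :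
    numComponents S + numComponents (I ∪ D) ≤ numComponents (S ∪ D) + numComponents I := by
  induction D using Finset.induction_on with
  | empty => rw [union_empty, union_empty, add_comm]
  | insert a D _ ih =>
    have := numComponents_insert_add_le (union_subset_union hIS (subset_refl D)) a
    rw [union_insert, union_insert]
    omega

theorem numComponents_supermod (S T : Finset (Sym2 V)) :
    numComponents S + numComponents T ≤ numComponents (S ∪ T) + numComponents (S ∩ T) := by
  have := numComponents_add_le_union (inter_subset_left (s₁ := S) (s₂ := T)) T
  rwa [union_eq_right.mpr inter_subset_right] at this

theorem isMatroidRank_graphicRank : IsMatroidRank (graphicRank (V := V)) where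
  le_card S := by
    have := card_le_numComponents_add_card S
    unfold graphicRank
    omega
  mono _ _ h := Nat.sub_le_sub_left (numComponents_anti h) _
  submod S T := by
    have := numComponents_supermod S T
    have := numComponents_le_card (S ∪ T)
    have := numComponents_le_card (S ∩ T)
    unfold graphicRank
    omega

theorem isAcyclic_fromEdgeSet_of_graphicRank_eq_card {S : Finset (Sym2 V)}
    (h : graphicRank S = #S) : (fromEdgeSet (S : Set (Sym2 V))).IsAcyclic := by
  rw [isAcyclic_iff_forall_adj_isBridge]
  intro u v huv
  have hmem : s(u, v) ∈ S := huv.1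
  rw [isBridge_iff, deleteEdges_fromEdgeSet, ← coe_erase]
  intro hreach
  have hsplit : fromEdgeSet (S : Set (Sym2 V)) = fromEdgeSet ↑(S.erase s(u, v)) ⊔ edge u v := by
    rw [← fromEdgeSet_insert, ← coe_insert, insert_erase hmem]
  have hcomp : numComponents S = numComponents (S.erase s(u, v)) := by
    rw [numComponents, hsplit, card_connectedComponent_sup_edge_of_reachable hreach, numComponents]
  have hle := isMatroidRank_graphicRank.le_card (S.erase s(u, v))
  rw [card_erase_of_mem hmem] at hle
  have := card_pos.mpr ⟨_, hmem⟩
  unfold graphicRank at h hle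
  omega

end GraphicRank

section Density

variable {V C : Type*} [Fintype V] [DecidableEq C] {col : Sym2 V → C} {f : C → ℕ}
  {E : Finset (Sym2 V)} {t : ℕ}

theorem le_graphicRank_filter_add_sum (hE : ∀ e ∈ E, ¬e.IsDiag) (hEt : t.choose 2 < #E)
    (hcol : ∀ c, t * #{e ∈ E | col e = c} ≤ #E * f c) (R : Finset C) :
    t ≤ graphicRank {e ∈ E | col e ∉ R} + ∑ c ∈ R, f c := by
  by_contra! h
  obtain ⟨d, hd, ht⟩ : ∃ d, graphicRank {e ∈ E | col e ∉ R} ≤ d ∧ t = d + 1 + ∑ c ∈ R, f c :=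
    ⟨t - 1 - ∑ c ∈ R, f c, by omega, by omega⟩
  have hN : 2 * #{e ∈ E | col e ∉ R} ≤ d * (d + 1) :=
    (two_mul_card_le_graphicRank_mul fun a ha ↦ hE a (mem_filter.mp ha).1).trans
      (Nat.mul_le_mul hd (Nat.add_le_add_right hd 1))
  have hR : t * #{e ∈ E | col e ∈ R} ≤ #E * ∑ c ∈ R, f c := by
    rw [card_eq_sum_card_fiberwise (s := {e ∈ E | col e ∈ R}) (f := col) (t := R)
      fun a ha ↦ (mem_filter.mp ha).2, mul_sum, mul_sum]
    exact sum_le_sum fun c _ ↦ (Nat.mul_le_mul_left t (card_le_card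
      (filter_subset_filter _ (filter_subset _ E)))).trans (hcol c)
  have hsplit : #{e ∈ E | col e ∉ R} + #{e ∈ E | col e ∈ R} = #E := by
    rw [add_comm, card_filter_add_card_filter_not]
  have h2E : 2 * #E ≤ t * d := hsplit ▸ Nat.two_mul_add_le_mul ht hN (hsplit ▸ hR)
  have : t * d ≤ t * (t - 1) := Nat.mul_le_mul_left t (by omega)
  rw [Nat.choose_two_right] at hEt
  omega

theorem le_graphicRank_add_partitionRank [DecidableEq V] [Fintype C] (hE : ∀ e ∈ E, ¬e.IsDiag)
    (hEt : t.choose 2 < #E) (hcol : ∀ c, t * #{e ∈ E | col e = c} ≤ #E * f c)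
    (A : Finset (Sym2 V)) : t ≤ graphicRank A + partitionRank col f (E \ A) := by
  set X := E \ A
  set R : Finset C := {c | f c ≤ #{e ∈ X | col e = c}}
  have hX : partitionRank col f X = ∑ c ∈ R, f c + #{e ∈ X | col e ∉ R} :=
    partitionRank_eq_sum_add_card (fun c hc ↦ (mem_filter.mp hc).2)
      fun c hc ↦ by simp only [R, mem_filter, mem_univ, true_and] at hc; omega
  have hsub : {e ∈ E | col e ∉ R} ⊆ A ∪ {e ∈ X | col e ∉ R} := by
    intro e he
    rw [mem_filter] at he
    by_cases heA : e ∈ A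
    · exact mem_union_left _ heA
    · exact mem_union_right _ (mem_filter.mpr ⟨mem_sdiff.mpr ⟨he.1, heA⟩, he.2⟩)
  have := isMatroidRank_graphicRank.mono hsub
  have := isMatroidRank_graphicRank.union_le_add_card A {e ∈ X | col e ∉ R}
  have := le_graphicRank_filter_add_sum hE hEt hcol R
  omega

end Density

theorem g_chromatic_has_f_chromatic_forest_general {V C : Type*} [Fintype V] [Fintype C]
    (G : SimpleGraph V) (color : Sym2 V → C) (f g : C → ℕ) (n w : ℕ)
    (hn : n = Fintype.card V) (hw2 : w ≤ n - 1)
    (hE : (n - w).choose 2 < G.edgeSet.ncard)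
    (hg : ∀ c : C, {e ∈ G.edgeSet | color e = c}.ncard ≤ g c)
    (hgf : ∀ c : C, (g c : ℝ) ≤ ((G.edgeSet.ncard : ℝ) / ((n : ℝ) - (w : ℝ))) * (f c : ℝ)) :
    ∃ F : SimpleGraph V, F ≤ G ∧ F.IsAcyclic ∧
      Nat.card F.ConnectedComponent = w ∧
      ∀ c : C, {e ∈ F.edgeSet | color e = c}.ncard ≤ f c := by
  classical
  have hwn : w ≤ n := hw2.trans (Nat.sub_le n 1)
  have hcard : G.edgeSet.ncard = #G.edgeFinset := Set.ncard_eq_toFinset_card' _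
  have hloop : ∀ e ∈ G.edgeFinset, ¬e.IsDiag :=
    fun e he ↦ G.not_isDiag_of_mem_edgeSet (mem_edgeFinset.mp he)
  have hcol (c : C) : (n - w) * #{e ∈ G.edgeFinset | color e = c} ≤ #G.edgeFinset * f c := by
    refine (Nat.mul_le_mul_left _ ?_).trans (Nat.mul_le_mul_of_cast_le_div_mul (a := g c) ?_)
    · rw [← ncard_sep_coe, coe_edgeFinset]
      exact hg c
    · rw [Nat.cast_sub hwn, ← hcard]
      exact hgf c
  obtain ⟨S, hSE, hSt, hSρ, hSf⟩ := isMatroidRank_graphicRank.exists_common_indep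
    (isMatroidRank_partitionRank color f)
    fun A _ ↦ le_graphicRank_add_partitionRank hloop (hcard ▸ hE) hcol A
  have hS : (fromEdgeSet (S : Set (Sym2 V))).edgeSet = S :=
    (edgeSet_eq_iff _ _).mpr ⟨rfl, Set.disjoint_left.mpr fun e he ↦ hloop e (hSE he)⟩
  refine ⟨fromEdgeSet S, G.fromEdgeSet_le.mpr fun e he ↦ mem_edgeFinset.mp (hSE he.1),
    isAcyclic_fromEdgeSet_of_graphicRank_eq_card (hSρ.trans hSt.symm), ?_, fun c ↦ ?_⟩
  · have := numComponents_le_card S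
    unfold graphicRank numComponents at hSρ this
    omega
  · rw [hS, ncard_sep_coe]
    exact card_filter_col_le_of_partitionRank_eq_card (hSf.trans hSt.symm) c

/-- A `g`-chromatic graph of order `n` with more than `C(n−w,2)` edges has an
`f`-chromatic spanning forest with exactly `w` components, provided
`g(c) ≤ (|E(G)|/(n−w))·f(c)` for every color `c`. -/
theorem g_chromatic_has_f_chromatic_forest {V C : Type*} [Fintype V] [Fintype C]
    (G : SimpleGraph V) (color : Sym2 V → C) (f g : C → ℕ) (n w : ℕ)
    (hn : n = Fintype.card V) (hw1 : 1 ≤ w) (hw2 : w ≤ n - 1)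
    (hE : (n - w).choose 2 < G.edgeSet.ncard)
    (hg : ∀ c : C, {e ∈ G.edgeSet | color e = c}.ncard ≤ g c)
    (hgf : ∀ c : C, (g c : ℝ) ≤ ((G.edgeSet.ncard : ℝ) / ((n : ℝ) - (w : ℝ))) * (f c : ℝ)) :
    ∃ F : SimpleGraph V, F ≤ G ∧ F.IsAcyclic ∧
      Nat.card F.ConnectedComponent = w ∧
      ∀ c : C, {e ∈ F.edgeSet | color e = c}.ncard ≤ f c :=
  g_chromatic_has_f_chromatic_forest_general G color f g n w hn hw2 hE hg hgf
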